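/- arXiv:1410.4594 — 6 statements merged into one kernel-verified Lean document; each statement's English description precedes it below -/
import Mathlib

section
/- Let Y' and Y'' be Young diagrams with |Y'| = |Y''| = n', at most r' and r'' rows, and at most c' and c'' columns respectively, satisfying r' + c'' ≤ N and r'' + c' ≤ 2N. Define the composite Young diagram Y = Y(Y',Y'') with rows l_i = r'' + l'_i for i = 1,...,r'; l_i = r'' for i = r'+1,...,N−l''_1; l_i = r''−k for i = N−l''_k+1,...,N−l''_{k+1} (k = 1,...,r''−1); and l_i = 0 for i = N−l''_{r''}+1,...,N−1. Then Y is a valid Young diagram (its row lengths are weakly decreasing) and has exactly |Y| = r''·N boxes. -/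
open Finset

/-- The rows of the composite SU(N) Young diagram `Y(Y',Y'')` built from two Young
diagrams `Y'` (rows `l'`, 0-indexed) and `Y''` (rows `l''`, 0-indexed, with `r''` nonzero
rows).  In 1-based terms the rows are: `l_i = r'' + l'_i` for `i ≤ r'`;
`l_i = r''` for `r' < i ≤ N - l''_1`; `l_i = r'' - k` for `N - l''_k < i ≤ N - l''_{k+1}`
(`k = 1, …, r''-1`); and `l_i = 0` for `i > N - l''_{r''}`.  Equivalently (0-indexed row
`i`): `l_i = r'' + l'_i - #{j < r'' : l''_j ≥ N - i}`. -/
def compRow (N : ℕ) (l' l'' : ℕ → ℕ) (r'' : ℕ) : ℕ → ℕ := fun i =>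
  r'' + l' i - ((Finset.range r'').filter (fun j => N - i ≤ l'' j)).card

/-- **The composite diagram is a Young diagram with `r''·N` boxes.**
Let `Y'` and `Y''` be Young diagrams with `|Y'| = |Y''| = n'`, with `r'`, `r''` (nonzero)
rows and `c'`, `c''` columns respectively, satisfying `r' + c'' ≤ N` and `r'' + c' ≤ 2N`.
Then the composite diagram `Y = Y(Y',Y'')` has weakly decreasing row lengths and exactly
`|Y| = r''·N` boxes. -/
theorem compRow_isYoungDiagram_and_card
    (N n' r' r'' c' c'' : ℕ) (hN : 1 ≤ N) (l' l'' : ℕ → ℕ)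
    (hdec' : ∀ i j : ℕ, i ≤ j → l' j ≤ l' i)
    (hdec'' : ∀ i j : ℕ, i ≤ j → l'' j ≤ l'' i)
    (hrows' : ∀ i : ℕ, l' i ≠ 0 ↔ i < r')
    (hrows'' : ∀ i : ℕ, l'' i ≠ 0 ↔ i < r'')
    (hc' : c' = l' 0) (hc'' : c'' = l'' 0)
    (hn' : ∑ i ∈ Finset.range r', l' i = n')
    (hn'' : ∑ i ∈ Finset.range r'', l'' i = n')
    (hcond1 : r' + c'' ≤ N) (hcond2 : r'' + c' ≤ 2 * N) :
    (∀ i j : ℕ, i ≤ j → j < N - 1 →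
        compRow N l' l'' r'' j ≤ compRow N l' l'' r'' i) ∧
    ∑ i ∈ Finset.range (N - 1), compRow N l' l'' r'' i = r'' * N := by
  -- monotonicity of the filter-card
  have hfmono : ∀ i j : ℕ, i ≤ j →
      ((Finset.range r'').filter (fun k => N - i ≤ l'' k)).card ≤
      ((Finset.range r'').filter (fun k => N - j ≤ l'' k)).card := by
    intro i j hij
    apply Finset.card_le_card
    intro x hx
    simp only [Finset.mem_filter, Finset.mem_range] at *
    exact ⟨hx.1, by omega⟩
  have hfle : ∀ i : ℕ,
      ((Finset.range r'').filter (fun k => N - i ≤ l'' k)).card ≤ r'' := by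
    intro i
    calc ((Finset.range r'').filter (fun k => N - i ≤ l'' k)).card
        ≤ (Finset.range r'').card := Finset.card_filter_le _ _
      _ = r'' := Finset.card_range _
  constructor
  · intro i j hij _
    have h1 := hdec' i j hij
    have h2 := hfmono i j hij
    simp only [compRow]
    omega
  · rcases Nat.eq_zero_or_pos r'' with hr0 | hr1
    · subst hr0
      have hn0 : n' = 0 := by simpa using hn''.symm
      have hr'0 : r' = 0 := by
        by_contra h
        have h0 : l' 0 ≠ 0 := (hrows' 0).2 (by omega)
        have : l' 0 ≤ ∑ i ∈ Finset.range r', l' i :=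
          Finset.single_le_sum (fun i _ => Nat.zero_le _) (Finset.mem_range.2 (by omega))
        omega
      have : ∀ i ∈ Finset.range (N - 1), compRow N l' l'' 0 i = 0 := by
        intro i _
        have : l' i = 0 := by
          by_contra h
          have := (hrows' i).1 h
          omega
        simp [compRow, this]
      rw [Finset.sum_congr rfl this]
      simp
    · -- r'' ≥ 1
      have hc''1 : 1 ≤ c'' := by
        have := (hrows'' 0).2 hr1
        omega
      obtain ⟨m, rfl⟩ : ∃ m, N = m + 1 := ⟨N - 1, by omega⟩
      have hr'm : r' ≤ m := by omega
      -- sum of l' over range m equals n'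
      have hl'sum : ∑ i ∈ Finset.range m, l' i = n' := by
        rw [← hn']
        symm
        apply Finset.sum_subset (Finset.range_subset_range.2 hr'm)
        intro x _ hx
        by_contra h
        exact hx (Finset.mem_range.2 ((hrows' x).1 h))
      -- sum of the filter-cards
      have hr''n' : r'' ≤ n' := by
        calc r'' = ∑ j ∈ Finset.range r'', 1 := by simp
          _ ≤ ∑ j ∈ Finset.range r'', l'' j := by
              apply Finset.sum_le_sum
              intro j hj
              have := (hrows'' j).2 (Finset.mem_range.1 hj)
              omega
          _ = n' := hn''
      have hfsum : ∑ i ∈ Finset.range m,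
          ((Finset.range r'').filter (fun k => (m+1) - i ≤ l'' k)).card = n' - r'' := by
        have e1 : ∀ i ∈ Finset.range m,
            ((Finset.range r'').filter (fun k => (m+1) - i ≤ l'' k)).card =
            ∑ j ∈ Finset.range r'', (if (m+1) - i ≤ l'' j then 1 else 0) := by
          intro i _
          rw [Finset.card_filter]
        rw [Finset.sum_congr rfl e1, Finset.sum_comm]
        have e2 : ∀ j ∈ Finset.range r'',
            ∑ i ∈ Finset.range m, (if (m+1) - i ≤ l'' j then 1 else 0) = l'' j - 1 := by
          intro j hj
          rw [← Finset.card_filter]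
          have h1 : l'' j ≠ 0 := (hrows'' j).2 (Finset.mem_range.1 hj)
          have h2 : l'' j ≤ c'' := hc'' ▸ hdec'' 0 j (Nat.zero_le _)
          have hIco : (Finset.range m).filter (fun i => (m+1) - i ≤ l'' j) =
              Finset.Ico ((m+1) - l'' j) m := by
            ext x
            simp only [Finset.mem_filter, Finset.mem_range, Finset.mem_Ico]
            omega
          rw [hIco, Nat.card_Ico]
          omega
        rw [Finset.sum_congr rfl e2]
        have e3 : ∑ j ∈ Finset.range r'', (l'' j - 1) + ∑ j ∈ Finset.range r'', 1
            = ∑ j ∈ Finset.range r'', l'' j := by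
          rw [← Finset.sum_add_distrib]
          apply Finset.sum_congr rfl
          intro j hj
          have := (hrows'' j).2 (Finset.mem_range.1 hj)
          omega
        simp only [Finset.sum_const, Finset.card_range, smul_eq_mul, mul_one] at e3
        omega
      -- main computation
      have hkey : ∀ i ∈ Finset.range m, compRow (m+1) l' l'' r'' i +
          ((Finset.range r'').filter (fun k => (m+1) - i ≤ l'' k)).card = r'' + l' i := by
        intro i _
        have := hfle i
        simp only [compRow]
        omega
      have hsum := Finset.sum_congr rfl hkey
      rw [Finset.sum_add_distrib, Finset.sum_add_distrib, hfsum, hl'sum,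
        Finset.sum_const, Finset.card_range, smul_eq_mul] at hsum
      simp only [Nat.add_sub_cancel]
      have hexp : r'' * (m + 1) = m * r'' + r'' := by ring
      rw [hexp]
      omega
end

section
/- With Y = Y(Y',Y'') the composite diagram built from Young diagrams Y', Y'' each with n' boxes satisfying r'+c'' ≤ N and r''+c' ≤ 2N, the quadratic Casimir of the corresponding SU(N) representation satisfies C_2(Y(Y',Y'')) = n'·N + C_2(Y') − C_2(Y''). -/
open Finset

/-- The quadratic Casimir of the SU(N) representation with Young diagram rows
`l : ℕ → ℕ` (0-indexed, supported on the first `N-1` rows):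
`C₂ = (1/2)[ -n²/N + nN + Σ_i (l_i² + l_i - 2·i·l_i) ]` with `n = Σ l_i`. -/
noncomputable def casimirC2 (N : ℕ) (l : ℕ → ℕ) : ℝ :=
  (1 / 2 : ℝ) *
    (-((∑ i ∈ Finset.range (N - 1), l i : ℕ) : ℝ) ^ 2 / N +
      ((∑ i ∈ Finset.range (N - 1), l i : ℕ) : ℝ) * N +
      ∑ i ∈ Finset.range (N - 1),
        ((l i : ℝ) ^ 2 + (l i : ℝ) - 2 * ((i : ℝ) + 1) * (l i : ℝ)))

def myF (N : ℕ) (l'' : ℕ → ℕ) (r'' : ℕ) (i : ℕ) : ℕ :=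
  ((Finset.range r'').filter (fun j => N - i ≤ l'' j)).card

lemma gauss_real (n : ℕ) : ∑ i ∈ range n, ((i:ℝ)+1) = n*(n+1)/2 := by
  induction n with
  | zero => simp
  | succ n ih => rw [Finset.sum_range_succ, ih]; push_cast; ring

lemma gauss_real0 (n : ℕ) : ∑ i ∈ range n, (i:ℝ) = n*(n-1)/2 := by
  induction n with
  | zero => simp
  | succ n ih => rw [Finset.sum_range_succ, ih]; push_cast; ring

lemma sum_Ico_real (a b : ℕ) (h : a ≤ b) :
    ∑ i ∈ Finset.Ico a b, ((i:ℝ)+1) = ((b:ℝ)*(b+1) - a*(a+1))/2 := by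
  rw [Finset.sum_Ico_eq_sub _ h, gauss_real, gauss_real]; ring

lemma sum_sum_max (a : ℕ → ℝ) (r : ℕ) :
    ∑ j ∈ range r, ∑ k ∈ range r, a (max j k) = ∑ m ∈ range r, (2*(m:ℝ)+1) * a m := by
  induction r with
  | zero => simp
  | succ r ih =>
    rw [Finset.sum_range_succ (f := fun j => ∑ k ∈ range (r+1), a (max j k)),
        Finset.sum_range_succ (f := fun m => (2*(m:ℝ)+1)*a m)]
    have h1 : ∀ j ∈ range r, ∑ k ∈ range (r+1), a (max j k)
        = (∑ k ∈ range r, a (max j k)) + a r := by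
      intro j hj
      rw [Finset.sum_range_succ, max_eq_right (le_of_lt (mem_range.mp hj))]
    have h2 : ∀ k ∈ range r, a (max r k) = a r := by
      intro k hk; rw [max_eq_left (le_of_lt (mem_range.mp hk))]
    rw [Finset.sum_congr rfl h1, Finset.sum_add_distrib, ih, Finset.sum_const, Finset.card_range,
        Finset.sum_range_succ, max_self, Finset.sum_congr rfl h2, Finset.sum_const,
        Finset.card_range]
    ring


/-- **Casimir of a composite representation.**
For Young diagrams `Y'`, `Y''` with `|Y'| = |Y''| = n'`, `r' + c'' ≤ N`, `r'' + c' ≤ 2N`,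
the quadratic Casimir of the composite SU(N) diagram satisfies
`C₂(Y(Y',Y'')) = n'·N + C₂(Y') - C₂(Y'')`. -/
theorem casimirC2_composite
    (N n' r' r'' c' c'' : ℕ) (hN : 1 ≤ N) (l' l'' : ℕ → ℕ)
    (hdec' : ∀ i j : ℕ, i ≤ j → l' j ≤ l' i)
    (hdec'' : ∀ i j : ℕ, i ≤ j → l'' j ≤ l'' i)
    (hrows' : ∀ i : ℕ, l' i ≠ 0 ↔ i < r')
    (hrows'' : ∀ i : ℕ, l'' i ≠ 0 ↔ i < r'')
    (hc' : c' = l' 0) (hc'' : c'' = l'' 0)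
    (hr' : r' ≤ N - 1) (hr'' : r'' ≤ N - 1)
    (hn' : ∑ i ∈ Finset.range r', l' i = n')
    (hn'' : ∑ i ∈ Finset.range r'', l'' i = n')
    (hcond1 : r' + c'' ≤ N) (hcond2 : r'' + c' ≤ 2 * N) :
    casimirC2 N (compRow N l' l'' r'') =
      (n' : ℝ) * N + casimirC2 N l' - casimirC2 N l'' := by
  -- basic facts about l''
  have hl''pos : ∀ j, j < r'' → 1 ≤ l'' j := fun j hj =>
    Nat.one_le_iff_ne_zero.mpr ((hrows'' j).mpr hj)
  have hl''N : ∀ j, j < r'' → l'' j ≤ N := by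
    intro j hj
    have h0 : l'' j ≤ l'' 0 := hdec'' 0 j (Nat.zero_le j)
    omega
  -- F i ≤ r''
  have hFle : ∀ i, myF N l'' r'' i ≤ r'' := by
    intro i
    have := Finset.card_filter_le (range r'') (fun j => N - i ≤ l'' j)
    rwa [Finset.card_range] at this
  -- cast of compRow
  have hL : ∀ i, ((compRow N l' l'' r'' i : ℕ) : ℝ)
      = (r'' : ℝ) + (l' i : ℝ) - (myF N l'' r'' i : ℝ) := by
    intro i
    show (((r'' + l' i - myF N l'' r'' i : ℕ)) : ℝ) = _
    rw [Nat.cast_sub (le_trans (hFle i) (Nat.le_add_right _ _))]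
    push_cast; ring
  -- cross term vanishes
  have hcross : ∀ i, (l' i : ℝ) * (myF N l'' r'' i : ℝ) = 0 := by
    intro i
    rcases eq_or_ne (l' i) 0 with h | h
    · simp [h]
    · have hi : i < r' := (hrows' i).mp h
      have hF0 : myF N l'' r'' i = 0 := by
        rw [myF, Finset.card_eq_zero, Finset.filter_eq_empty_iff]
        intro j hj
        have hjlt := Finset.mem_range.mp hj
        have h1 : l'' j ≤ l'' 0 := hdec'' 0 j (Nat.zero_le j)
        omega
      simp [hF0]
  -- filter over i is an interval
  have hfilterIco : ∀ m : ℕ, (range (N-1)).filter (fun i => N - i ≤ m) = Ico (N - m) (N-1) := by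
    intro m
    ext i
    simp only [Finset.mem_filter, Finset.mem_range, Finset.mem_Ico]
    omega
  -- pointwise: F i as a sum of indicators
  have hFrow : ∀ i, (myF N l'' r'' i : ℝ)
      = ∑ j ∈ range r'', (if N - i ≤ l'' j then (1:ℝ) else 0) := by
    intro i
    rw [myF, Finset.card_filter]
    push_cast
    rfl
  -- real versions of box counts
  have hT1nat : ∑ i ∈ range (N-1), l' i = n' := by
    rw [← hn']
    exact (Finset.sum_subset (Finset.range_subset_range.mpr hr')
      (fun i _ hi => by
        by_contra h
        exact absurd ((hrows' i).mp h) (by simpa using hi))).symm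
  have hT1nat'' : ∑ i ∈ range (N-1), l'' i = n' := by
    rw [← hn'']
    exact (Finset.sum_subset (Finset.range_subset_range.mpr hr'')
      (fun i _ hi => by
        by_contra h
        exact absurd ((hrows'' i).mp h) (by simpa using hi))).symm
  have hT1R : ∑ i ∈ range (N-1), (l' i : ℝ) = (n' : ℝ) := by
    exact_mod_cast congrArg (Nat.cast : ℕ → ℝ) hT1nat
  have hT2R : ∑ j ∈ range r'', (l'' j : ℝ) = (n' : ℝ) := by
    exact_mod_cast congrArg (Nat.cast : ℕ → ℝ) hn''
  have hNcast : ((N - 1 : ℕ) : ℝ) = (N : ℝ) - 1 := by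
    rw [Nat.cast_sub hN]; norm_num
  -- sum of F
  have hS1 : ∑ i ∈ range (N-1), (myF N l'' r'' i : ℝ) = (n' : ℝ) - (r'' : ℝ) := by
    calc ∑ i ∈ range (N-1), (myF N l'' r'' i : ℝ)
        = ∑ i ∈ range (N-1), ∑ j ∈ range r'', (if N - i ≤ l'' j then (1:ℝ) else 0) :=
          Finset.sum_congr rfl (fun i _ => hFrow i)
      _ = ∑ j ∈ range r'', ∑ i ∈ range (N-1), (if N - i ≤ l'' j then (1:ℝ) else 0) :=
          Finset.sum_comm
      _ = ∑ j ∈ range r'', ((l'' j : ℝ) - 1) := by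
          refine Finset.sum_congr rfl (fun j hj => ?_)
          have hjlt := Finset.mem_range.mp hj
          rw [Finset.sum_boole, hfilterIco (l'' j), Nat.card_Ico,
            show (N - 1) - (N - l'' j) = l'' j - 1 by
              have := hl''pos j hjlt; have := hl''N j hjlt; omega,
            Nat.cast_sub (hl''pos j hjlt)]
          norm_num
      _ = (n' : ℝ) - (r'' : ℝ) := by
          rw [Finset.sum_sub_distrib, hT2R, Finset.sum_const, Finset.card_range]
          simp
  -- sum of (i+1) * F
  have hS2 : 2 * ∑ i ∈ range (N-1), ((i:ℝ)+1) * (myF N l'' r'' i : ℝ)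
      = (2*(N:ℝ)+1)*(n':ℝ) - (∑ j ∈ range r'', (l'' j : ℝ)^2) - 2*(N:ℝ)*(r'':ℝ) := by
    have step : ∑ i ∈ range (N-1), ((i:ℝ)+1) * (myF N l'' r'' i : ℝ)
        = ∑ j ∈ range r'', (((2*(N:ℝ)+1)*(l'' j:ℝ) - (l'' j:ℝ)^2 - 2*(N:ℝ))/2) := by
      calc ∑ i ∈ range (N-1), ((i:ℝ)+1) * (myF N l'' r'' i : ℝ)
          = ∑ i ∈ range (N-1), ∑ j ∈ range r'',
              (if N - i ≤ l'' j then ((i:ℝ)+1) else 0) := by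
            refine Finset.sum_congr rfl (fun i _ => ?_)
            rw [hFrow i, Finset.mul_sum]
            exact Finset.sum_congr rfl (fun j _ => by split_ifs <;> ring)
        _ = ∑ j ∈ range r'', ∑ i ∈ range (N-1),
              (if N - i ≤ l'' j then ((i:ℝ)+1) else 0) := Finset.sum_comm
        _ = ∑ j ∈ range r'', (((2*(N:ℝ)+1)*(l'' j:ℝ) - (l'' j:ℝ)^2 - 2*(N:ℝ))/2) := by
            refine Finset.sum_congr rfl (fun j hj => ?_)
            have hjlt := Finset.mem_range.mp hj
            have h1 := hl''pos j hjlt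
            have h2 := hl''N j hjlt
            rw [← Finset.sum_filter, hfilterIco (l'' j),
              sum_Ico_real (N - l'' j) (N-1) (by omega),
              Nat.cast_sub (by omega : l'' j ≤ N), hNcast]
            ring
    rw [step, Finset.mul_sum]
    have hcong : ∑ j ∈ range r'', (2:ℝ) * (((2*(N:ℝ)+1)*(l'' j:ℝ) - (l'' j:ℝ)^2 - 2*(N:ℝ))/2)
        = ∑ j ∈ range r'', ((2*(N:ℝ)+1)*(l'' j:ℝ) - (l'' j:ℝ)^2 - 2*(N:ℝ)) :=
      Finset.sum_congr rfl (fun j _ => by ring)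
    rw [hcong, Finset.sum_sub_distrib, Finset.sum_sub_distrib, ← Finset.mul_sum, hT2R,
      Finset.sum_const, Finset.card_range]
    simp only [nsmul_eq_mul]
    ring
  -- sum of F^2
  have hS3 : ∑ i ∈ range (N-1), (myF N l'' r'' i : ℝ)^2
      = (∑ m ∈ range r'', (2*(m:ℝ)+1) * (l'' m : ℝ)) - (r'':ℝ)^2 := by
    have hprod : ∀ i, ∀ j ∈ range r'', ∀ k ∈ range r'',
        (if N - i ≤ l'' j then (1:ℝ) else 0) * (if N - i ≤ l'' k then (1:ℝ) else 0)
        = (if N - i ≤ l'' (max j k) then (1:ℝ) else 0) := by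
      intro i j hj k hk
      rcases le_total j k with h | h
      · rw [max_eq_right h]
        have hle : l'' k ≤ l'' j := hdec'' j k h
        split_ifs <;> first | ring1 | (exfalso; omega)
      · rw [max_eq_left h]
        have hle : l'' j ≤ l'' k := hdec'' k j h
        split_ifs <;> first | ring1 | (exfalso; omega)
    calc ∑ i ∈ range (N-1), (myF N l'' r'' i : ℝ)^2
        = ∑ i ∈ range (N-1), ∑ j ∈ range r'', ∑ k ∈ range r'',
            (if N - i ≤ l'' (max j k) then (1:ℝ) else 0) := by
          refine Finset.sum_congr rfl (fun i _ => ?_)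
          rw [hFrow i, sq, Finset.sum_mul_sum]
          exact Finset.sum_congr rfl (fun j hj =>
            Finset.sum_congr rfl (fun k hk => hprod i j hj k hk))
      _ = ∑ j ∈ range r'', ∑ k ∈ range r'', ∑ i ∈ range (N-1),
            (if N - i ≤ l'' (max j k) then (1:ℝ) else 0) := by
          rw [Finset.sum_comm]
          exact Finset.sum_congr rfl (fun j _ => Finset.sum_comm)
      _ = ∑ j ∈ range r'', ∑ k ∈ range r'', ((l'' (max j k) : ℝ) - 1) := by
          refine Finset.sum_congr rfl (fun j hj => Finset.sum_congr rfl (fun k hk => ?_))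
          have hjk : max j k < r'' := by
            have := Finset.mem_range.mp hj; have := Finset.mem_range.mp hk; omega
          rw [Finset.sum_boole, hfilterIco (l'' (max j k)), Nat.card_Ico,
            show (N - 1) - (N - l'' (max j k)) = l'' (max j k) - 1 by
              have := hl''pos _ hjk; have := hl''N _ hjk; omega,
            Nat.cast_sub (hl''pos _ hjk)]
          norm_num
      _ = (∑ m ∈ range r'', (2*(m:ℝ)+1) * (l'' m : ℝ)) - (r'':ℝ)^2 := by
          simp only [Finset.sum_sub_distrib, Finset.sum_const, Finset.card_range,
            nsmul_eq_mul, mul_one]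
          rw [sum_sum_max (fun m => (l'' m : ℝ)) r'']
          ring
  -- total boxes of the composite diagram: N * r''
  have hLsumR : ((∑ i ∈ range (N-1), compRow N l' l'' r'' i : ℕ) : ℝ) = (N:ℝ) * (r'':ℝ) := by
    push_cast
    rw [Finset.sum_congr rfl (fun i (_ : i ∈ range (N-1)) => hL i), Finset.sum_sub_distrib,
      Finset.sum_add_distrib, Finset.sum_const, Finset.card_range, hT1R, hS1, nsmul_eq_mul,
      hNcast]
    ring
  have hexp : ∀ i ∈ range (N-1),
      ((compRow N l' l'' r'' i : ℕ) : ℝ)^2 + ((compRow N l' l'' r'' i : ℕ) : ℝ)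
        - 2*((i:ℝ)+1)*((compRow N l' l'' r'' i : ℕ) : ℝ)
      = (r'':ℝ)^2 + (l' i:ℝ)^2 + (myF N l'' r'' i:ℝ)^2
        + (2*(r'':ℝ))*(l' i:ℝ) - (2*(r'':ℝ))*(myF N l'' r'' i:ℝ)
        + (r'':ℝ) + (l' i:ℝ) - (myF N l'' r'' i:ℝ)
        - (2*(r'':ℝ))*((i:ℝ)+1)
        - 2*(((i:ℝ)+1)*(l' i:ℝ)) + 2*(((i:ℝ)+1)*(myF N l'' r'' i:ℝ)) := by
    intro i _
    rw [hL i]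
    linear_combination (-2:ℝ) * hcross i
  have hMainSum : ∑ i ∈ range (N-1),
      (((compRow N l' l'' r'' i : ℕ) : ℝ)^2 + ((compRow N l' l'' r'' i : ℕ) : ℝ)
        - 2*((i:ℝ)+1)*((compRow N l' l'' r'' i : ℕ) : ℝ))
      = (∑ i ∈ range (N-1), (l' i:ℝ)^2) - 2*(∑ i ∈ range (N-1), ((i:ℝ)+1)*(l' i:ℝ))
        + (2*(N:ℝ)+1)*(n':ℝ) + (∑ m ∈ range r'', (2*(m:ℝ)+1)*(l'' m:ℝ))
        - (∑ j ∈ range r'', (l'' j:ℝ)^2)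
        + (N:ℝ)*(r'':ℝ)^2 - (N:ℝ)^2*(r'':ℝ) := by
    rw [Finset.sum_congr rfl hexp]
    simp only [Finset.sum_add_distrib, Finset.sum_sub_distrib, ← Finset.mul_sum,
      Finset.sum_const, Finset.card_range, nsmul_eq_mul]
    rw [hT1R, hS1, hS3, gauss_real0 (N-1), hNcast]
    linear_combination hS2
  have hCp : ∑ i ∈ range (N-1), ((l' i:ℝ)^2 + (l' i:ℝ) - 2*((i:ℝ)+1)*(l' i:ℝ))
      = (∑ i ∈ range (N-1), (l' i:ℝ)^2) + (n':ℝ)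
        - 2*(∑ i ∈ range (N-1), ((i:ℝ)+1)*(l' i:ℝ)) := by
    have hc : ∀ i ∈ range (N-1), (l' i:ℝ)^2 + (l' i:ℝ) - 2*((i:ℝ)+1)*(l' i:ℝ)
        = (l' i:ℝ)^2 + (l' i:ℝ) - 2*(((i:ℝ)+1)*(l' i:ℝ)) := fun i _ => by ring
    rw [Finset.sum_congr rfl hc, Finset.sum_sub_distrib, Finset.sum_add_distrib,
      ← Finset.mul_sum, hT1R]
  have hshrink : ∑ i ∈ range (N-1), ((l'' i:ℝ)^2 + (l'' i:ℝ) - 2*((i:ℝ)+1)*(l'' i:ℝ))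
      = ∑ j ∈ range r'', ((l'' j:ℝ)^2 + (l'' j:ℝ) - 2*((j:ℝ)+1)*(l'' j:ℝ)) := by
    refine (Finset.sum_subset (Finset.range_subset_range.mpr hr'') (fun i _ hi => ?_)).symm
    have h0 : l'' i = 0 := by
      by_contra h
      exact absurd ((hrows'' i).mp h) (by simpa using hi)
    simp [h0]
  have hCpp : ∑ i ∈ range (N-1), ((l'' i:ℝ)^2 + (l'' i:ℝ) - 2*((i:ℝ)+1)*(l'' i:ℝ))
      = (∑ j ∈ range r'', (l'' j:ℝ)^2) + (n':ℝ)
        - 2*(∑ j ∈ range r'', ((j:ℝ)+1)*(l'' j:ℝ)) := by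
    rw [hshrink]
    have hc : ∀ j ∈ range r'', (l'' j:ℝ)^2 + (l'' j:ℝ) - 2*((j:ℝ)+1)*(l'' j:ℝ)
        = (l'' j:ℝ)^2 + (l'' j:ℝ) - 2*(((j:ℝ)+1)*(l'' j:ℝ)) := fun j _ => by ring
    rw [Finset.sum_congr rfl hc, Finset.sum_sub_distrib, Finset.sum_add_distrib,
      ← Finset.mul_sum, hT2R]
  have hQrel : ∑ m ∈ range r'', (2*(m:ℝ)+1)*(l'' m:ℝ)
      = 2*(∑ j ∈ range r'', ((j:ℝ)+1)*(l'' j:ℝ)) - (n':ℝ) := by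
    have hc : ∀ j ∈ range r'', (2*(j:ℝ)+1)*(l'' j:ℝ)
        = 2*(((j:ℝ)+1)*(l'' j:ℝ)) - (l'' j:ℝ) := fun j _ => by ring
    rw [Finset.sum_congr rfl hc, Finset.sum_sub_distrib, ← Finset.mul_sum, hT2R]
  have hNne : (N:ℝ) ≠ 0 := Nat.cast_ne_zero.mpr (by omega)
  rw [casimirC2, casimirC2, casimirC2, hT1nat, hT1nat'', hLsumR, hMainSum, hCp, hCpp, hQrel]
  field_simp
  ring
end

section
/- For a Young diagram Y = (l_1,...,l_{N-1}) of SU(N) whose number of boxes n = Σ l_i is divisible by N, set r'' = n/N and define Y' = (l_1 − r'', ..., l_{N-1} − r'') and Y''^T = (r'', r''−l_{N-1}, ..., r''−l_1), in each case deleting non-positive trailing entries. Then Y' and Y'' are Young diagrams with |Y'| = |Y''|, and applying the composite construction to the pair (Y',Y'') recovers Y, i.e., Y(Y',Y'') = Y. -/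
open Finset

/-- `Y' = (l_1 - r'', …, l_{N-1} - r'')` (0-indexed; non-positive entries become `0`). -/
def invYPrime (l : ℕ → ℕ) (r'' : ℕ) : ℕ → ℕ := fun i => l i - r''

/-- The transpose `Y''^T = (r'', r'' - l_{N-1}, …, r'' - l_1)` (0-indexed;
non-positive entries become `0`). -/
def invYDoublePrimeT (N : ℕ) (l : ℕ → ℕ) (r'' : ℕ) : ℕ → ℕ := fun j =>
  if j < N then r'' - l (N - 1 - j) else 0

/-- `Y''` itself, obtained as the conjugate (transpose) of `Y''^T`. -/
def invYDoublePrime (N : ℕ) (l : ℕ → ℕ) (r'' : ℕ) : ℕ → ℕ := fun j =>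
  ((Finset.range N).filter (fun i => j + 1 ≤ invYDoublePrimeT N l r'' i)).card

lemma card_reflect (N : ℕ) (p : ℕ → Prop) [DecidablePred p] :
    ((Finset.range N).filter (fun m => p (N - 1 - m))).card
      = ((Finset.range N).filter p).card := by
  have himg : (Finset.range N).filter (fun m => p (N - 1 - m))
      = ((Finset.range N).filter p).image (fun k => N - 1 - k) := by
    ext m
    simp only [mem_filter, mem_image, mem_range]
    constructor
    · rintro ⟨hm, hp⟩
      exact ⟨N - 1 - m, ⟨by omega, hp⟩, by omega⟩
    · rintro ⟨k, ⟨hk, hp⟩, rfl⟩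
      refine ⟨by omega, ?_⟩
      have hkk : N - 1 - (N - 1 - k) = k := by omega
      rwa [hkk]
  rw [himg, Finset.card_image_of_injOn]
  intro a ha b hb hab
  simp only [Finset.coe_filter, Set.mem_setOf_eq, mem_range] at ha hb
  have h2 : N - 1 - a = N - 1 - b := hab
  omega

lemma cardB (N i : ℕ) (l : ℕ → ℕ) (hdec : ∀ a b : ℕ, a ≤ b → l b ≤ l a)
    (hi : i < N) (c : ℕ) :
    N - i ≤ ((Finset.range N).filter (fun k => l k ≤ c)).card ↔ l i ≤ c := by
  constructor
  · intro h
    by_contra hc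
    push_neg at hc
    have hsub : (Finset.range N).filter (fun k => l k ≤ c) ⊆ Finset.Ico (i + 1) N := by
      intro k hk
      simp only [mem_filter, mem_range] at hk
      simp only [Finset.mem_Ico]
      refine ⟨?_, hk.1⟩
      by_contra hki
      push_neg at hki
      exact absurd (le_trans (hdec k i (by omega)) hk.2) (by omega)
    have := Finset.card_le_card hsub
    rw [Nat.card_Ico] at this
    omega
  · intro h
    have hsub : Finset.Ico i N ⊆ (Finset.range N).filter (fun k => l k ≤ c) := by
      intro k hk
      simp only [Finset.mem_Ico] at hk
      simp only [mem_filter, mem_range]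
      exact ⟨hk.2, le_trans (hdec i k hk.1) h⟩
    have := Finset.card_le_card hsub
    rw [Nat.card_Ico] at this
    omega

/-- **The inverse of the composite construction.**
Let `Y = (l_1,…,l_{N-1})` be an SU(N) Young diagram whose number of boxes `n = Σ l_i` is
divisible by `N`, and set `r'' = n/N`.  Then `Y' = (l_1 - r'', …, l_{N-1} - r'')` and
`Y''` (defined via its transpose `Y''^T = (r'', r''-l_{N-1}, …, r''-l_1)`, deleting
non-positive trailing entries) are Young diagrams with `|Y'| = |Y''|`, and the composite
construction applied to `(Y', Y'')` recovers `Y`: `Y(Y',Y'') = Y`. -/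
theorem inverse_composite_construction
    (N n r'' : ℕ) (hN : 2 ≤ N) (l : ℕ → ℕ)
    (hdec : ∀ i j : ℕ, i ≤ j → l j ≤ l i)
    (hsupp : ∀ i : ℕ, N - 1 ≤ i → l i = 0)
    (hn : n = ∑ i ∈ Finset.range (N - 1), l i)
    (hdvd : N ∣ n) (hr'' : r'' = n / N) :
    (∀ i j : ℕ, i ≤ j → invYPrime l r'' j ≤ invYPrime l r'' i) ∧
    (∀ i j : ℕ, i ≤ j → invYDoublePrime N l r'' j ≤ invYDoublePrime N l r'' i) ∧
    (∑ i ∈ Finset.range (N - 1), invYPrime l r'' i =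
      ∑ j ∈ Finset.range r'', invYDoublePrime N l r'' j) ∧
    (∀ i : ℕ, i < N - 1 →
      compRow N (invYPrime l r'') (invYDoublePrime N l r'') r'' i = l i) := by
  have hnr : n = N * r'' := by
    obtain ⟨k, hk⟩ := hdvd
    subst hk
    rw [hr'', Nat.mul_div_cancel_left k (by omega)]
  refine ⟨?_, ?_, ?_, ?_⟩
  · intro i j hij
    exact Nat.sub_le_sub_right (hdec i j hij) r''
  · intro i j hij
    apply Finset.card_le_card
    intro m hm
    simp only [mem_filter] at hm ⊢
    exact ⟨hm.1, by omega⟩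
  · -- sum equality
    have key : ∀ m ∈ Finset.range N,
        ∑ j ∈ Finset.range r'',
          (if j + 1 ≤ invYDoublePrimeT N l r'' m then 1 else 0)
          = r'' - l (N - 1 - m) := by
      intro m hm
      rw [mem_range] at hm
      rw [← Finset.card_filter]
      have hfe : (Finset.range r'').filter
          (fun j => j + 1 ≤ invYDoublePrimeT N l r'' m) = Finset.range (r'' - l (N - 1 - m)) := by
        ext j
        simp only [mem_filter, mem_range, invYDoublePrimeT, if_pos hm]
        omega
      rw [hfe, Finset.card_range]
    have hrhs : ∑ j ∈ Finset.range r'', invYDoublePrime N l r'' j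
        = ∑ k ∈ Finset.range N, (r'' - l k) := by
      unfold invYDoublePrime
      simp only [Finset.card_filter]
      rw [Finset.sum_comm]
      rw [Finset.sum_congr rfl key]
      exact Finset.sum_range_reflect (fun k => r'' - l k) N
    rw [hrhs]
    have hsplit : ∑ k ∈ Finset.range N, (r'' - l k)
        = (∑ k ∈ Finset.range (N - 1), (r'' - l k)) + (r'' - l (N - 1)) := by
      conv_lhs => rw [show N = N - 1 + 1 from by omega]
      rw [Finset.sum_range_succ]
    have hl0 : l (N - 1) = 0 := hsupp (N - 1) le_rfl
    have hterm : ∑ i ∈ Finset.range (N - 1), ((l i - r'') + r'')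
        = ∑ i ∈ Finset.range (N - 1), (l i + (r'' - l i)) :=
      Finset.sum_congr rfl (fun i _ => by omega)
    rw [Finset.sum_add_distrib, Finset.sum_add_distrib, Finset.sum_const,
      Finset.card_range, smul_eq_mul] at hterm
    have hmul : (N - 1) * r'' + r'' = N * r'' := by
      have h1 : N - 1 + 1 = N := by omega
      calc (N - 1) * r'' + r'' = (N - 1 + 1) * r'' := by ring
        _ = N * r'' := by rw [h1]
    simp only [invYPrime]
    omega
  · intro i hi
    have hiN : i < N := by omega
    have hkey : (Finset.range r'').filter (fun j => N - i ≤ invYDoublePrime N l r'' j)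
        = Finset.range (r'' - l i) := by
      have hYpp : ∀ j < r'', (N - i ≤ invYDoublePrime N l r'' j ↔ j < r'' - l i) := by
        intro j hj
        unfold invYDoublePrime
        have e1 : (Finset.range N).filter (fun m => j + 1 ≤ invYDoublePrimeT N l r'' m)
            = (Finset.range N).filter (fun m => j + 1 ≤ r'' - l (N - 1 - m)) := by
          apply Finset.filter_congr
          intro m hm
          rw [mem_range] at hm
          simp [invYDoublePrimeT, hm]
        rw [e1, card_reflect N (fun k => j + 1 ≤ r'' - l k)]
        have e2 : (Finset.range N).filter (fun k => j + 1 ≤ r'' - l k)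
            = (Finset.range N).filter (fun k => l k ≤ r'' - (j + 1)) := by
          apply Finset.filter_congr
          intro k _
          constructor <;> (intro; omega)
        rw [e2, cardB N i l hdec hiN (r'' - (j + 1))]
        omega
      ext j
      simp only [mem_filter, mem_range]
      constructor
      · rintro ⟨h1, h2⟩
        exact (hYpp j h1).mp h2
      · intro h
        have h1 : j < r'' := by omega
        exact ⟨h1, (hYpp j h1).mpr h⟩
    unfold compRow invYPrime
    rw [hkey, Finset.card_range]
    omega
end

section
/- For a weight a ∈ J_N corresponding to a composite pair (Y',Y'') with row data as in the inverse construction, the shift of the quadratic Casimir under the i-th power of the simple current map γ equals C_2(γ^i(a)) − C_2(a) = 3N·( Σ_{j=1}^{i-1} l_{N-j} + i·(N − r'' − i) ); in particular C_2(γ^i(a)) ≡ C_2(a) (mod N). -/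
open Finset

/-- The simple-current map `γ` on level-`2N` affine SU(N) weights (0-indexed):
`γ([λ_1,…,λ_{N-1}]) = [2N - Σ_s λ_s, λ_1, …, λ_{N-2}]`. -/
def gam (N : ℕ) (lam : ℕ → ℕ) : ℕ → ℕ := fun i =>
  if i = 0 then 2 * N - ∑ s ∈ Finset.range (N - 1), lam s
  else if i < N - 1 then lam (i - 1) else 0

/-- The Young diagram row lengths `l_i = Σ_{s=i}^{N-1} λ_s` associated to a weight
(0-indexed: `l i = Σ_{s ∈ [i, N-1)} λ_s`). -/
def rowsOfWeight (N : ℕ) (lam : ℕ → ℕ) : ℕ → ℕ := fun i =>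
  ∑ s ∈ Finset.Ico i (N - 1), lam s

lemma gauss_real_s7 (M : ℕ) : (∑ j ∈ Finset.range M, (j:ℝ)) * 2 = (M:ℝ)^2 - M := by
  induction M with
  | zero => simp
  | succ k ih => rw [Finset.sum_range_succ]; push_cast; ring_nf; ring_nf at ih; linarith

lemma rows_anti (N : ℕ) (lam : ℕ → ℕ) {j k : ℕ} (h : j ≤ k) :
    rowsOfWeight N lam k ≤ rowsOfWeight N lam j :=
  Finset.sum_le_sum_of_subset (Finset.Ico_subset_Ico h le_rfl)

lemma rows_top (N : ℕ) (lam : ℕ → ℕ) {j : ℕ} (h : N - 1 ≤ j) :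
    rowsOfWeight N lam j = 0 := by
  unfold rowsOfWeight
  rw [Finset.Ico_eq_empty (by omega), Finset.sum_empty]

lemma rows_zero (N : ℕ) (lam : ℕ → ℕ) :
    rowsOfWeight N lam 0 = ∑ s ∈ Finset.range (N - 1), lam s := by
  unfold rowsOfWeight; rw [Finset.range_eq_Ico]

lemma rows_last (N : ℕ) (hN : 2 ≤ N) (mu : ℕ → ℕ) :
    rowsOfWeight N mu (N-2) = mu (N-2) := by
  unfold rowsOfWeight
  rw [Finset.sum_Ico_eq_sum_range]
  rw [show N - 1 - (N-2) = 1 by omega, Finset.sum_range_one, Nat.add_zero]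

lemma gam_row_succ (N : ℕ) (hN : 2 ≤ N) (mu : ℕ → ℕ) {j : ℕ} (h1 : 1 ≤ j) (h2 : j ≤ N - 1) :
    rowsOfWeight N (gam N mu) j + rowsOfWeight N mu (N-2) = rowsOfWeight N mu (j-1) := by
  have e1 : rowsOfWeight N (gam N mu) j = ∑ s ∈ Finset.Ico j (N-1), mu (s-1) := by
    unfold rowsOfWeight
    refine Finset.sum_congr rfl fun s hs => ?_
    simp only [Finset.mem_Ico] at hs
    unfold gam
    rw [if_neg (by omega), if_pos hs.2]
  rw [e1, rows_last N hN, Finset.sum_Ico_eq_sum_range]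
  unfold rowsOfWeight
  rw [Finset.sum_Ico_eq_sum_range, show N - 1 - (j-1) = (N-1-j)+1 by omega,
    Finset.sum_range_succ]
  congr 1
  · refine Finset.sum_congr rfl fun k hk => ?_
    congr 1; omega
  · congr 1; omega

lemma gam_row_zero (N : ℕ) (hN : 2 ≤ N) (mu : ℕ → ℕ)
    (hlev : ∑ s ∈ Finset.range (N - 1), mu s ≤ 2 * N) :
    rowsOfWeight N (gam N mu) 0 + rowsOfWeight N mu (N-2) = 2 * N := by
  have hsplit : rowsOfWeight N (gam N mu) 0
      = gam N mu 0 + rowsOfWeight N (gam N mu) 1 := by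
    unfold rowsOfWeight
    rw [Finset.sum_eq_sum_Ico_succ_bot (by omega : 0 < N - 1)]
  have h1 := gam_row_succ N hN mu (le_refl 1) (by omega)
  rw [rows_zero] at h1
  have h0 : gam N mu 0 = 2 * N - ∑ s ∈ Finset.range (N - 1), mu s := by
    unfold gam; rw [if_pos rfl]
  omega

lemma step_casimir (N : ℕ) (hN : 2 ≤ N) (mu : ℕ → ℕ)
    (hlev : ∑ s ∈ Finset.range (N - 1), mu s ≤ 2 * N) :
    casimirC2 N (rowsOfWeight N (gam N mu)) - casimirC2 N (rowsOfWeight N mu)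
      = 3*(N:ℝ)^2 - 3*N - 3 * ∑ j ∈ Finset.range (N-1), (rowsOfWeight N mu j : ℝ) := by
  obtain ⟨M, rfl⟩ : ∃ M, N = M + 2 := ⟨N - 2, by omega⟩
  set l := rowsOfWeight (M+2) mu with hl
  set l' := rowsOfWeight (M+2) (gam (M+2) mu) with hl'
  set c : ℝ := (l M : ℝ) with hc
  have h0 : (l' 0 : ℝ) = 2*(M+2) - c := by
    have h := gam_row_zero (M+2) hN mu hlev
    rw [show M+2-2 = M from rfl] at h
    have h2 := congrArg (Nat.cast : ℕ → ℝ) h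
    push_cast at h2; rw [hc]; linarith
  have hj : ∀ j < M, (l' (j+1) : ℝ) = (l j : ℝ) - c := by
    intro j hjM
    have h := gam_row_succ (M+2) hN mu (j := j+1) (by omega) (by omega)
    rw [show M+2-2 = M from rfl, Nat.add_sub_cancel] at h
    have h2 := congrArg (Nat.cast : ℕ → ℝ) h
    push_cast at h2; rw [hc]; linarith
  set A : ℝ := ∑ j ∈ Finset.range M, (l j : ℝ) with hA
  set G : ℝ := ∑ j ∈ Finset.range M, (j : ℝ) with hG
  set B : ℝ := ∑ j ∈ Finset.range M, ((l j : ℝ)^2 + (l j:ℝ) - 2*((j:ℝ)+1)*(l j:ℝ)) with hB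
  have hGv : G = ((M:ℝ)^2 - M)/2 := by have := gauss_real_s7 M; rw [← hG] at this; linarith
  have SL : ((∑ i ∈ Finset.range (M+2-1), l i : ℕ) : ℝ) = A + c := by
    rw [show M+2-1 = M+1 from rfl]
    push_cast
    rw [Finset.sum_range_succ]
  have ST : (∑ i ∈ Finset.range (M+2-1), ((l i : ℝ)^2 + (l i:ℝ) - 2*((i:ℝ)+1)*(l i:ℝ)))
      = B + (c^2 + c - 2*((M:ℝ)+1)*c) := by
    rw [show M+2-1 = M+1 from rfl, Finset.sum_range_succ]
  have SL' : ((∑ i ∈ Finset.range (M+2-1), l' i : ℕ) : ℝ) = (2*((M:ℝ)+2) - c) + (A - M*c) := by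
    rw [show M+2-1 = M+1 from rfl]
    push_cast
    rw [Finset.sum_range_succ']
    have e : ∑ j ∈ Finset.range M, (l' (j+1) : ℝ) = ∑ j ∈ Finset.range M, ((l j : ℝ) - c) :=
      Finset.sum_congr rfl fun j hj' => hj j (Finset.mem_range.mp hj')
    rw [e, Finset.sum_sub_distrib, Finset.sum_const, Finset.card_range, h0, ← hA]
    push_cast; ring
  have ST' : (∑ i ∈ Finset.range (M+2-1), ((l' i : ℝ)^2 + (l' i:ℝ) - 2*((i:ℝ)+1)*(l' i:ℝ)))
      = B + ((M:ℝ)*(c^2 + 3*c) - (2*c+2)*A + 2*c*G)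
        + ((2*((M:ℝ)+2) - c)^2 + (2*((M:ℝ)+2) - c) - 2*(2*((M:ℝ)+2) - c)) := by
    rw [show M+2-1 = M+1 from rfl, Finset.sum_range_succ']
    have e2 : (∑ j ∈ Finset.range M,
        ((l' (j+1) : ℝ)^2 + (l' (j+1):ℝ) - 2*(((j+1:ℕ):ℝ)+1)*(l' (j+1):ℝ)))
        = ∑ j ∈ Finset.range M, (((l j : ℝ)^2 + (l j:ℝ) - 2*((j:ℝ)+1)*(l j:ℝ))
          + (c^2 + 3*c - (2*c+2)*(l j:ℝ) + 2*c*(j:ℝ))) := by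
      refine Finset.sum_congr rfl fun j hj' => ?_
      rw [hj j (Finset.mem_range.mp hj')]
      push_cast; ring
    rw [e2, Finset.sum_add_distrib, ← hB, h0]
    have e3 : ∑ j ∈ Finset.range M, (c^2 + 3*c - (2*c+2)*(l j:ℝ) + 2*c*(j:ℝ))
        = (M:ℝ)*(c^2+3*c) - (2*c+2)*A + 2*c*G := by
      rw [Finset.sum_add_distrib, Finset.sum_sub_distrib, Finset.sum_const,
        Finset.card_range, ← Finset.mul_sum, ← Finset.mul_sum, ← hA, ← hG, nsmul_eq_mul]
    rw [e3]
    push_cast; ring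
  have hSr : (∑ j ∈ Finset.range (M+2-1), (l j : ℝ)) = A + c := by
    rw [show M+2-1 = M+1 from rfl, Finset.sum_range_succ]
  have hNne : ((M:ℝ)+2) ≠ 0 := by positivity
  unfold casimirC2
  rw [SL, SL', ST, ST', hSr, hGv]
  push_cast
  field_simp
  ring

lemma rows_iter (N : ℕ) (hN : 2 ≤ N) (lam : ℕ → ℕ)
    (hlev : ∑ s ∈ Finset.range (N - 1), lam s ≤ 2 * N) :
    ∀ t, 1 ≤ t → t ≤ N - 1 →
      (∑ s ∈ Finset.range (N - 1), (gam N)^[t] lam s ≤ 2 * N) ∧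
      (∀ j, j < t → rowsOfWeight N ((gam N)^[t] lam) j + rowsOfWeight N lam (N-1-t)
          = 2*N + rowsOfWeight N lam (N-t+j)) ∧
      (∀ j, t ≤ j → j ≤ N - 1 → rowsOfWeight N ((gam N)^[t] lam) j + rowsOfWeight N lam (N-1-t)
          = rowsOfWeight N lam (j-t)) := by
  intro t h1t
  induction t, h1t using Nat.le_induction with
  | base =>
    intro _
    rw [Function.iterate_one]
    have h0 := gam_row_zero N hN lam hlev
    refine ⟨?_, ?_, ?_⟩
    · rw [← rows_zero]
      omega
    · intro j hj
      interval_cases j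
      rw [show N-1-1 = N-2 by omega, show N-1+0 = N-1 by omega,
        rows_top N lam (le_refl (N-1))]
      omega
    · intro j hj1 hj2
      rw [show N-1-1 = N-2 by omega]
      exact gam_row_succ N hN lam hj1 hj2
  | succ t ht ih =>
    intro htN
    obtain ⟨H2, F1, F2⟩ := ih (by omega)
    set mu := (gam N)^[t] lam with hmu
    have hit : (gam N)^[t+1] lam = gam N mu := Function.iterate_succ_apply' (gam N) t lam
    -- c_t : last row of mu
    have hct : rowsOfWeight N mu (N-2) + rowsOfWeight N lam (N-1-t) = rowsOfWeight N lam (N-2-t) := by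
      have := F2 (N-2) (by omega) (by omega)
      rwa [show N-2-t = N-2-t from rfl] at this
    have hz := gam_row_zero N hN mu H2
    -- new zeroth row
    have hnew0 : rowsOfWeight N (gam N mu) 0 + rowsOfWeight N lam (N-1-(t+1))
        = 2*N + rowsOfWeight N lam (N-1-t) := by
      rw [show N-1-(t+1) = N-2-t by omega]
      omega
    refine ⟨?_, ?_, ?_⟩
    · rw [hit, ← rows_zero]
      have hanti : rowsOfWeight N lam (N-1-t) ≤ rowsOfWeight N lam (N-2-t) :=
        rows_anti N lam (by omega)
      omega
    · intro j hj
      rw [hit]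
      rcases Nat.eq_zero_or_pos j with rfl | hjpos
      · rw [show N-(t+1)+0 = N-1-t by omega]
        exact hnew0
      · have hs := gam_row_succ N hN mu (j := j) hjpos (by omega)
        have hf := F1 (j-1) (by omega)
        rw [show N-t+(j-1) = N-(t+1)+j by omega] at hf
        rw [show N-1-(t+1) = N-2-t by omega]
        omega
    · intro j hj1 hj2
      rw [hit]
      have hs := gam_row_succ N hN mu (j := j) (by omega) hj2
      have hf := F2 (j-1) (by omega) (by omega)
      rw [show j-1-t = j-(t+1) by omega] at hf
      rw [show N-1-(t+1) = N-2-t by omega]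
      omega

lemma sum_rows_iter (N : ℕ) (hN : 2 ≤ N) (lam : ℕ → ℕ)
    (hlev : ∑ s ∈ Finset.range (N - 1), lam s ≤ 2 * N) :
    ∀ t, t ≤ N - 1 →
      (∑ j ∈ Finset.range (N-1), (rowsOfWeight N ((gam N)^[t] lam) j : ℝ))
        = (∑ j ∈ Finset.range (N-1), (rowsOfWeight N lam j : ℝ))
          + 2*(N:ℝ)*t - (N:ℝ) * (rowsOfWeight N lam (N-1-t) : ℝ) := by
  intro t htN
  rcases Nat.eq_zero_or_pos t with rfl | htpos
  · rw [Function.iterate_zero_apply, show N-1-0 = N-1 from rfl, rows_top N lam (le_refl _)]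
    push_cast; ring
  obtain ⟨_, F1, F2⟩ := rows_iter N hN lam hlev t htpos htN
  set l := rowsOfWeight N lam with hl
  set c : ℝ := (l (N-1-t) : ℝ) with hc
  -- pointwise real formulas
  have G1 : ∀ j < t, (rowsOfWeight N ((gam N)^[t] lam) j : ℝ) = 2*N + (l (N-t+j) : ℝ) - c := by
    intro j hj
    have h := congrArg (Nat.cast : ℕ → ℝ) (F1 j hj)
    push_cast at h; rw [hc]; linarith
  have G2 : ∀ j, t ≤ j → j ≤ N-1 → (rowsOfWeight N ((gam N)^[t] lam) j : ℝ) = (l (j-t) : ℝ) - c := by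
    intro j hj1 hj2
    have h := congrArg (Nat.cast : ℕ → ℝ) (F2 j hj1 hj2)
    push_cast at h; rw [hc]; linarith
  -- split the sum
  have hsplit : ∑ j ∈ Finset.range (N-1), (rowsOfWeight N ((gam N)^[t] lam) j : ℝ)
      = ∑ j ∈ Finset.range t, (rowsOfWeight N ((gam N)^[t] lam) j : ℝ)
        + ∑ j ∈ Finset.Ico t (N-1), (rowsOfWeight N ((gam N)^[t] lam) j : ℝ) := by
    rw [Finset.range_eq_Ico, ← Finset.sum_Ico_consecutive _ (Nat.zero_le t) (by omega : t ≤ N-1),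
      ← Finset.range_eq_Ico]
  have hpart1 : ∑ j ∈ Finset.range t, (rowsOfWeight N ((gam N)^[t] lam) j : ℝ)
      = 2*(N:ℝ)*t - t*c + ∑ j ∈ Finset.range t, (l (N-t+j) : ℝ) := by
    rw [Finset.sum_congr rfl (fun j hj => G1 j (Finset.mem_range.mp hj))]
    simp only [Finset.sum_sub_distrib, Finset.sum_add_distrib, Finset.sum_const,
      Finset.card_range, nsmul_eq_mul]
    ring
  have hpart2 : ∑ j ∈ Finset.Ico t (N-1), (rowsOfWeight N ((gam N)^[t] lam) j : ℝ)
      = ∑ j ∈ Finset.range (N-1-t), (l j : ℝ) - ((N:ℝ)-1-t)*c := by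
    have e : ∑ j ∈ Finset.Ico t (N-1), (rowsOfWeight N ((gam N)^[t] lam) j : ℝ)
        = ∑ j ∈ Finset.Ico t (N-1), ((l (j-t) : ℝ) - c) := by
      refine Finset.sum_congr rfl fun j hj => ?_
      have hm := Finset.mem_Ico.mp hj
      exact G2 j hm.1 (by omega)
    rw [e, Finset.sum_sub_distrib, Finset.sum_const, Nat.card_Ico, nsmul_eq_mul,
      Finset.sum_Ico_eq_sum_range]
    have e2 : ∑ j ∈ Finset.range (N-1-t), (l (t+j-t) : ℝ)
        = ∑ j ∈ Finset.range (N-1-t), (l j : ℝ) := by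
      refine Finset.sum_congr rfl fun j hj => ?_
      congr 2; omega
    rw [e2]
    have : ((N - 1 - t : ℕ) : ℝ) = (N:ℝ) - 1 - t := by
      rw [Nat.cast_sub (by omega : t ≤ N - 1), Nat.cast_sub (by omega : 1 ≤ N)]
      push_cast; ring
    rw [this]
  -- reindex first partial sum
  have ltop : l (N-1) = 0 := rows_top N lam (le_refl _)
  have hre : ∑ j ∈ Finset.range t, (l (N-t+j) : ℝ)
      = ∑ m ∈ Finset.Ico (N-t) (N-1), (l m : ℝ) := by
    obtain ⟨t', rfl⟩ : ∃ t', t = t' + 1 := ⟨t - 1, by omega⟩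
    rw [Finset.sum_range_succ, show N-(t'+1)+t' = N-1 by omega, ltop,
      Finset.sum_Ico_eq_sum_range, show N-1-(N-(t'+1)) = t' by omega]
    simp
  -- combine tails: range (N-1) = range (N-1-t) ∪ {N-1-t} ∪ Ico (N-t) (N-1)
  have htail : ∑ j ∈ Finset.range (N-1), (l j : ℝ)
      = ∑ j ∈ Finset.range (N-1-t), (l j : ℝ) + c + ∑ m ∈ Finset.Ico (N-t) (N-1), (l m : ℝ) := by
    rw [Finset.range_eq_Ico,
      ← Finset.sum_Ico_consecutive _ (Nat.zero_le (N-1-t)) (by omega : N-1-t ≤ N-1),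
      ← Finset.range_eq_Ico,
      Finset.sum_eq_sum_Ico_succ_bot (by omega : N-1-t < N-1),
      show N-1-t+1 = N-t by omega]
    rw [hc]
    ring
  rw [hsplit, hpart1, hpart2, hre, htail]
  ring

lemma main_formula (N n r'' : ℕ) (hN : 2 ≤ N) (lam : ℕ → ℕ)
    (hlevel : ∑ s ∈ Finset.range (N - 1), lam s ≤ 2 * N)
    (hn : n = ∑ j ∈ Finset.range (N - 1), rowsOfWeight N lam j)
    (hdvd : N ∣ n) (hr'' : r'' = n / N) :
    ∀ i, i ≤ N - 1 →
      casimirC2 N (rowsOfWeight N ((gam N)^[i] lam)) - casimirC2 N (rowsOfWeight N lam) =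
        3 * (N : ℝ) *
          ((∑ j ∈ Finset.Ico 1 i, (rowsOfWeight N lam (N - j - 1) : ℝ)) +
            (i : ℝ) * ((N : ℝ) - (r'' : ℝ) - (i : ℝ))) := by
  have hr : (r'' : ℝ) * N = n := by
    subst hr''
    exact_mod_cast congrArg (Nat.cast : ℕ → ℝ) (Nat.div_mul_cancel hdvd)
  have hnR : (n : ℝ) = ∑ j ∈ Finset.range (N-1), (rowsOfWeight N lam j : ℝ) := by
    rw [hn]; push_cast; rfl
  intro i
  induction i with
  | zero =>
    intro _
    rw [Function.iterate_zero_apply, sub_self]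
    simp
  | succ i ih =>
    intro hi1
    have hDi := ih (by omega)
    have hlev_i : ∑ s ∈ Finset.range (N - 1), (gam N)^[i] lam s ≤ 2 * N := by
      rcases Nat.eq_zero_or_pos i with rfl | hipos
      · simpa using hlevel
      · exact (rows_iter N hN lam hlevel i hipos (by omega)).1
    have hstep := step_casimir N hN ((gam N)^[i] lam) hlev_i
    rw [← Function.iterate_succ_apply' (gam N) i lam] at hstep
    have hsum := sum_rows_iter N hN lam hlevel i (by omega)
    have hS : (∑ j ∈ Finset.Ico 1 (i+1), (rowsOfWeight N lam (N - j - 1) : ℝ))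
        = (∑ j ∈ Finset.Ico 1 i, (rowsOfWeight N lam (N - j - 1) : ℝ))
          + (rowsOfWeight N lam (N-1-i) : ℝ) := by
      rcases Nat.eq_zero_or_pos i with rfl | hipos
      · rw [show N-1-0 = N-1 from rfl, rows_top N lam (le_refl _)]
        simp
      · rw [Finset.sum_Ico_succ_top (by omega : 1 ≤ i), show N-i-1 = N-1-i by omega]
    push_cast at hstep hDi hsum hS ⊢
    linear_combination hstep + hDi - 3*(N:ℝ)*hS - 3*hsum + 3*hr + 3*hnR

/-- **Casimir shift under powers of the simple current.**
For a level-`2N` weight `a` with row lengths `l_j` and `N ∣ n = Σ l_j`, `r'' = n/N`,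
the `i`-th power of the simple current shifts the quadratic Casimir by
`C₂(γ^i(a)) - C₂(a) = 3N·( Σ_{j=1}^{i-1} l_{N-j} + i·(N - r'' - i) )`;
in particular `C₂(γ^i(a)) ≡ C₂(a) (mod N)`. -/
theorem casimir_shift_simple_current
    (N n r'' i : ℕ) (hN : 2 ≤ N) (hi : i < N) (lam : ℕ → ℕ)
    (hsupp : ∀ s : ℕ, N - 1 ≤ s → lam s = 0)
    (hlevel : ∑ s ∈ Finset.range (N - 1), lam s ≤ 2 * N)
    (hn : n = ∑ j ∈ Finset.range (N - 1), rowsOfWeight N lam j)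
    (hdvd : N ∣ n) (hr'' : r'' = n / N) :
    casimirC2 N (rowsOfWeight N ((gam N)^[i] lam)) - casimirC2 N (rowsOfWeight N lam) =
      3 * (N : ℝ) *
        ((∑ j ∈ Finset.Ico 1 i, (rowsOfWeight N lam (N - j - 1) : ℝ)) +
          (i : ℝ) * ((N : ℝ) - (r'' : ℝ) - (i : ℝ))) ∧
    ∃ m : ℤ,
      casimirC2 N (rowsOfWeight N ((gam N)^[i] lam)) - casimirC2 N (rowsOfWeight N lam) =
        (m : ℝ) * N := by
  have hmain := main_formula N n r'' hN lam hlevel hn hdvd hr'' i (by omega)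
  refine ⟨hmain, ?_⟩
  refine ⟨3 * ((∑ j ∈ Finset.Ico 1 i, (rowsOfWeight N lam (N - j - 1) : ℤ))
    + (i : ℤ) * ((N : ℤ) - (r'' : ℤ) - (i : ℤ))), ?_⟩
  rw [hmain]
  push_cast
  ring
end

section
/- If a pair of equal Young diagrams Y' = Y'' is mapped by some power γ^k (1 ≤ k ≤ N−1) of the simple current to another pair of equal Young diagrams, then Y' is of rectangular shape; equivalently, the only simple-current orbits on level-2N SU(N) weights containing two distinct diagonal representatives (Y', Y'' = Y') are the orbits of the weights a_ν = [0,...,0,N,0,...,0] with the single nonzero entry N in position ν. -/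
open Finset

lemma rows_antitone (N : ℕ) (lam : ℕ → ℕ) {i j : ℕ} (h : i ≤ j) :
    rowsOfWeight N lam j ≤ rowsOfWeight N lam i :=
  Finset.sum_le_sum_of_subset (Finset.Ico_subset_Ico h le_rfl)

lemma rows_eq_zero (N : ℕ) (lam : ℕ → ℕ) {m : ℕ} (h : N - 1 ≤ m) :
    rowsOfWeight N lam m = 0 := by
  unfold rowsOfWeight
  rw [Finset.Ico_eq_empty (by omega)]
  simp

/-- Key bound: a diagonal weight has top row at most `N`. -/
lemma diag_bound (N : ℕ) (lam : ℕ → ℕ) (hN : 2 ≤ N) (r : ℕ)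
    (hdiag : ∀ i : ℕ, invYPrime (rowsOfWeight N lam) r i =
      invYDoublePrime N (rowsOfWeight N lam) r i) :
    rowsOfWeight N lam 0 ≤ N := by
  set R := rowsOfWeight N lam with hR
  rcases Nat.eq_zero_or_pos r with hr | hr
  · have h0 := hdiag 0
    unfold invYPrime invYDoublePrime invYDoublePrimeT at h0
    subst hr
    simp at h0
    omega
  · -- first: R (r-1) ≥ r + 1
    have h1 := hdiag (r - 1)
    unfold invYPrime invYDoublePrime invYDoublePrimeT at h1
    have hmem : 0 ∈ (Finset.range N).filter
        (fun i => r - 1 + 1 ≤ if i < N then r - R (N - 1 - i) else 0) := by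
      rw [Finset.mem_filter]
      refine ⟨Finset.mem_range.2 (by omega), ?_⟩
      have : R (N - 1 - 0) = 0 := rows_eq_zero N lam (by omega)
      rw [if_pos (by omega), this]
      omega
    have hcard1 : 1 ≤ ((Finset.range N).filter
        (fun i => r - 1 + 1 ≤ if i < N then r - R (N - 1 - i) else 0)).card :=
      Finset.card_pos.2 ⟨0, hmem⟩
    have hRr : r + 1 ≤ R (r - 1) := by omega
    have hrN : r ≤ N - 1 := by
      by_contra hc
      have : R (r - 1) = 0 := rows_eq_zero N lam (by omega)
      omega
    -- second: R 0 - r ≤ N - r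
    have h2 := hdiag 0
    unfold invYPrime invYDoublePrime invYDoublePrimeT at h2
    have hsub : ((Finset.range N).filter
        (fun i => 0 + 1 ≤ if i < N then r - R (N - 1 - i) else 0)) ⊆
        Finset.range (N - r) := by
      intro j hj
      rw [Finset.mem_filter] at hj
      obtain ⟨hj1, hj2⟩ := hj
      rw [Finset.mem_range] at hj1 ⊢
      rw [if_pos hj1] at hj2
      by_contra hc
      have hle : N - 1 - j ≤ r - 1 := by omega
      have hmono := rows_antitone N lam hle
      rw [← hR] at hmono
      omega
    have hcard2 := Finset.card_le_card hsub
    rw [Finset.card_range] at hcard2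
    omega

/-- One-step formula for the rows of `gam`. -/
lemma step_rows_pos (N : ℕ) (hN : 2 ≤ N) (mu : ℕ → ℕ) {i : ℕ} (hi : 1 ≤ i) :
    rowsOfWeight N (gam N mu) i
      = rowsOfWeight N mu (i - 1) - rowsOfWeight N mu (N - 2) := by
  unfold rowsOfWeight
  have hcongr : ∑ s ∈ Finset.Ico i (N - 1), gam N mu s
      = ∑ s ∈ Finset.Ico i (N - 1), mu (s - 1) := by
    apply Finset.sum_congr rfl
    intro s hs
    rw [Finset.mem_Ico] at hs
    unfold gam
    rw [if_neg (by omega), if_pos (by omega)]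
  rw [hcongr]
  have hreind : ∑ s ∈ Finset.Ico i (N - 1), mu (s - 1)
      = ∑ t ∈ Finset.Ico (i - 1) (N - 2), mu t := by
    apply Finset.sum_nbij' (fun s => s - 1) (fun t => t + 1)
    · intro s hs; rw [Finset.mem_Ico] at hs ⊢; omega
    · intro t ht; rw [Finset.mem_Ico] at ht ⊢; omega
    · intro s hs; rw [Finset.mem_Ico] at hs; omega
    · intro t ht; rw [Finset.mem_Ico] at ht; omega
    · intro s hs; rfl
  rw [hreind]
  rcases le_or_gt (i - 1) (N - 2) with hle | hlt
  · have hsplit : ∑ t ∈ Finset.Ico (i-1) (N-1), mu t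
        = (∑ t ∈ Finset.Ico (i-1) (N-2), mu t) + ∑ t ∈ Finset.Ico (N-2) (N-1), mu t :=
      (Finset.sum_Ico_consecutive _ hle (by omega)).symm
    omega
  · rw [Finset.Ico_eq_empty (show ¬ (i-1) < N-1 by omega), Finset.Ico_eq_empty (show ¬ (i-1) < N-2 by omega)]
    simp

lemma step_rows_zero (N : ℕ) (hN : 2 ≤ N) (mu : ℕ → ℕ) :
    rowsOfWeight N (gam N mu) 0
      = (2 * N - rowsOfWeight N mu 0) + (rowsOfWeight N mu 0 - rowsOfWeight N mu (N - 2)) := by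
  have h1 := step_rows_pos N hN mu (le_refl 1)
  have hsplit : rowsOfWeight N (gam N mu) 0
      = gam N mu 0 + rowsOfWeight N (gam N mu) 1 := by
    unfold rowsOfWeight
    rw [show Finset.Ico 0 (N-1) = insert 0 (Finset.Ico 1 (N-1)) by
      ext x; simp [Finset.mem_Ico]; omega]
    rw [Finset.sum_insert (by simp)]
  have hg0 : gam N mu 0 = 2 * N - rowsOfWeight N mu 0 := by
    unfold gam rowsOfWeight
    rw [if_pos rfl, Finset.range_eq_Ico]
  rw [hsplit, hg0, h1]

/-- Explicit formula for the rows of the `j`-th iterate of `gam`. -/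
lemma iter_rows (N : ℕ) (lam : ℕ → ℕ) (hN : 2 ≤ N)
    (hlevel : rowsOfWeight N lam 0 ≤ 2 * N) :
    ∀ j, 1 ≤ j → j ≤ N - 1 → ∀ i,
      rowsOfWeight N ((gam N)^[j] lam) i =
        if i < j then (2 * N - rowsOfWeight N lam (N - 1 - j)) + rowsOfWeight N lam (N - j + i)
        else rowsOfWeight N lam (i - j) - rowsOfWeight N lam (N - 1 - j) := by
  intro j hj1
  induction j with
  | zero => omega
  | succ j ih =>
    intro hjN i
    rcases Nat.eq_zero_or_pos j with hj0 | hjpos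
    · -- base case j + 1 = 1
      subst hj0
      rw [Function.iterate_one]
      rcases Nat.eq_zero_or_pos i with hi0 | hipos
      · subst hi0
        rw [if_pos (by omega), step_rows_zero N hN lam]
        have h1 : rowsOfWeight N lam (N - 1 - 1) = rowsOfWeight N lam (N - 2) := by
          rw [Nat.sub_sub]
        have h2 : rowsOfWeight N lam (N - 1 + 0) = 0 := rows_eq_zero N lam (by omega)
        have h3 : rowsOfWeight N lam (N - 2) ≤ rowsOfWeight N lam 0 :=
          rows_antitone N lam (by omega)
        rw [h1, h2]
        omega
      · rw [if_neg (by omega), step_rows_pos N hN lam hipos]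
        have : N - 1 - 1 = N - 2 := by omega
        rw [this]
    · -- inductive step
      have IH := ih hjpos (by omega)
      rw [Function.iterate_succ_apply']
      set mu := (gam N)^[j] lam with hmu
      have ha : rowsOfWeight N lam (N - j) ≤ rowsOfWeight N lam (N - 1 - j) :=
        rows_antitone N lam (by omega)
      have hab : rowsOfWeight N lam (N - 1 - j) ≤ rowsOfWeight N lam (N - 2 - j) :=
        rows_antitone N lam (by omega)
      have hb2N : rowsOfWeight N lam (N - 2 - j) ≤ 2 * N :=
        le_trans (rows_antitone N lam (Nat.zero_le _)) hlevel
      have hmu0 : rowsOfWeight N mu 0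
          = (2 * N - rowsOfWeight N lam (N - 1 - j)) + rowsOfWeight N lam (N - j) := by
        have := IH 0
        rwa [if_pos hjpos, Nat.add_zero] at this
      have hmuN2 : rowsOfWeight N mu (N - 2)
          = rowsOfWeight N lam (N - 2 - j) - rowsOfWeight N lam (N - 1 - j) := by
        have := IH (N - 2)
        rwa [if_neg (by omega)] at this
      rcases Nat.eq_zero_or_pos i with hi0 | hipos
      · subst hi0
        rw [if_pos (by omega), step_rows_zero N hN mu, hmu0, hmuN2]
        have : N - (j + 1) + 0 = N - 1 - j := by omega
        rw [this, show N - 1 - (j + 1) = N - 2 - j by omega]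
        omega
      · rw [step_rows_pos N hN mu hipos, hmuN2]
        rcases lt_or_ge i (j + 1) with hij | hij
        · rw [if_pos hij]
          have hIH := IH (i - 1)
          rw [if_pos (by omega)] at hIH
          rw [hIH, show N - j + (i - 1) = N - (j + 1) + i by omega,
            show N - 1 - (j + 1) = N - 2 - j by omega]
          omega
        · rw [if_neg (by omega)]
          have hIH := IH (i - 1)
          rw [if_neg (by omega)] at hIH
          rw [hIH, show i - 1 - j = i - (j + 1) by omega,
            show N - 1 - (j + 1) = N - 2 - j by omega]
          omega

/-- **Only rectangular diagrams give two diagonal representatives in one orbit.**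
Suppose the level-`2N` SU(N) weight `a` (with `N ∣ n`, `r'' = n/N`) is diagonal,
`Y'(a) = Y''(a)`, and for some `1 ≤ k ≤ N-1` the weight `γ^k(a)` is again diagonal,
`Y'(γ^k(a)) = Y''(γ^k(a))`.  Then `Y'(a)` is rectangular; equivalently, `a` is one of the
weights `a_ν = [0,…,0,N,0,…,0]` with single nonzero Dynkin label `N` in position `ν`. -/
theorem diagonal_orbit_rectangular
    (N n r'' k n2 r2 : ℕ) (hN : 2 ≤ N) (hk1 : 1 ≤ k) (hk2 : k ≤ N - 1)
    (lam : ℕ → ℕ)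
    (hsupp : ∀ s : ℕ, N - 1 ≤ s → lam s = 0)
    (hlevel : ∑ s ∈ Finset.range (N - 1), lam s ≤ 2 * N)
    (hn : n = ∑ j ∈ Finset.range (N - 1), rowsOfWeight N lam j)
    (hdvd : N ∣ n) (hr'' : r'' = n / N)
    (hn2 : n2 = ∑ j ∈ Finset.range (N - 1), rowsOfWeight N ((gam N)^[k] lam) j)
    (hr2 : r2 = n2 / N)
    (hdiag : ∀ i : ℕ, invYPrime (rowsOfWeight N lam) r'' i =
      invYDoublePrime N (rowsOfWeight N lam) r'' i)
    (hdiag2 : ∀ i : ℕ, invYPrime (rowsOfWeight N ((gam N)^[k] lam)) r2 i =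
      invYDoublePrime N (rowsOfWeight N ((gam N)^[k] lam)) r2 i) :
    ∃ ν : ℕ, 1 ≤ ν ∧ ν ≤ N - 1 ∧ ∀ s : ℕ, lam s = if s = ν - 1 then N else 0 := by
  have hlevel' : rowsOfWeight N lam 0 ≤ 2 * N := by
    unfold rowsOfWeight
    rwa [← Finset.range_eq_Ico]
  have h0 : rowsOfWeight N lam 0 ≤ N := diag_bound N lam hN r'' hdiag
  have hL : rowsOfWeight N ((gam N)^[k] lam) 0 ≤ N :=
    diag_bound N ((gam N)^[k] lam) hN r2 hdiag2
  have hform := iter_rows N lam hN hlevel' k hk1 hk2 0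
  rw [if_pos (by omega), Nat.add_zero] at hform
  rw [hform] at hL
  have hc : rowsOfWeight N lam (N - 1 - k) ≤ N :=
    le_trans (rows_antitone N lam (Nat.zero_le _)) h0
  have hcN : rowsOfWeight N lam (N - 1 - k) = N := by omega
  have hNk0 : rowsOfWeight N lam (N - k) = 0 := by omega
  refine ⟨N - k, by omega, by omega, ?_⟩
  -- rows are N up to N-1-k and 0 from N-k on
  have hrows_hi : ∀ i, i ≤ N - 1 - k → rowsOfWeight N lam i = N := by
    intro i hi
    have h1 := rows_antitone N lam hi (j := N - 1 - k)
    have h2 := rows_antitone N lam (Nat.zero_le i)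
    omega
  have hrows_lo : ∀ i, N - k ≤ i → rowsOfWeight N lam i = 0 := by
    intro i hi
    have := rows_antitone N lam hi
    omega
  have hlamrow : ∀ s, s < N - 1 → rowsOfWeight N lam s = lam s + rowsOfWeight N lam (s + 1) := by
    intro s hs
    unfold rowsOfWeight
    rw [Finset.sum_eq_sum_Ico_succ_bot (by omega)]
  intro s
  rcases le_or_gt (N - 1) s with hs | hs
  · rw [hsupp s hs, if_neg (by omega)]
  · have hrow := hlamrow s hs
    rcases lt_trichotomy s (N - 1 - k) with h | h | h
    · rw [if_neg (by omega)]
      have := hrows_hi s (by omega)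
      have := hrows_hi (s + 1) (by omega)
      omega
    · rw [if_pos (by omega)]
      have := hrows_hi s (by omega)
      have := hrows_lo (s + 1) (by omega)
      omega
    · rw [if_neg (by omega)]
      have := hrows_lo s (by omega)
      have := hrows_lo (s + 1) (by omega)
      omega
end

section
/- The integers b^{(k)}_m := Σ_{i=0}^{k−m} (−1)^{i+k+m} · i! · C(k,m) · C(k−m,i) · C(i+m,i) satisfy the recursion b^{(k)}_m = (k(k−1)/(k−m)) · (b^{(k−2)}_m + b^{(k−1)}_m) for k > m, with initial conditions b^{(m−1)}_m = 0 and b^{(m)}_m = 1. -/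
open Finset

/-- The walled-Brauer multiplicities `b^{(k)}_m` of composite representations in the
`k`-th tensor power of the SU(N) adjoint representation. -/
def bCoef (k m : ℕ) : ℤ :=
  ∑ i ∈ Finset.range (k - m + 1),
    (-1) ^ (i + k + m) * (i.factorial : ℤ) * (k.choose m) * ((k - m).choose i) *
      ((i + m).choose i)

/-- Auxiliary alternating sum `U_m(n) = ∑ (-1)^{i+n} C(n,i) (i+m)!`. -/
def Uaux (m n : ℕ) : ℤ :=
  ∑ i ∈ Finset.range (n + 1), (-1) ^ (i + n) * (n.choose i : ℤ) * ((i + m).factorial : ℤ)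

lemma Uaux_L1 (m n : ℕ) : Uaux m (n + 1) = Uaux (m + 1) n - Uaux m n := by
  have step1 : Uaux m (n + 1)
      = (∑ i ∈ range (n + 1),
          (-1 : ℤ) ^ (i + 1 + (n + 1)) * (((n + 1).choose (i + 1) : ℕ) : ℤ) * ((i + 1 + m).factorial : ℤ))
        + (-1 : ℤ) ^ (n + 1) * (m.factorial : ℤ) := by
    unfold Uaux
    rw [Finset.sum_range_succ']
    norm_num
  have step2 : ∀ i ∈ range (n + 1),
      (-1 : ℤ) ^ (i + 1 + (n + 1)) * (((n + 1).choose (i + 1) : ℕ) : ℤ) * ((i + 1 + m).factorial : ℤ)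
      = (-1 : ℤ) ^ (i + n) * (n.choose i : ℤ) * ((i + (m + 1)).factorial : ℤ)
        + (-1 : ℤ) ^ (i + n) * (n.choose (i + 1) : ℤ) * ((i + 1 + m).factorial : ℤ) := by
    intro i _
    rw [Nat.choose_succ_succ]
    push_cast
    rw [show i + 1 + (n + 1) = (i + n) + 2 from by omega, show i + (m + 1) = i + 1 + m from by omega]
    ring
  have step3 : (∑ i ∈ range (n + 1), (-1 : ℤ) ^ (i + n) * (n.choose i : ℤ) * ((i + (m + 1)).factorial : ℤ))
      = Uaux (m + 1) n := rfl
  have step4 : (∑ i ∈ range (n + 1), (-1 : ℤ) ^ (i + n) * (n.choose (i + 1) : ℤ) * ((i + 1 + m).factorial : ℤ))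
      = -Uaux m n + (-1 : ℤ) ^ n * (m.factorial : ℤ) := by
    have hU : Uaux m n
        = (∑ i ∈ range n, (-1 : ℤ) ^ (i + 1 + n) * (n.choose (i + 1) : ℤ) * ((i + 1 + m).factorial : ℤ))
          + (-1 : ℤ) ^ n * (m.factorial : ℤ) := by
      unfold Uaux
      rw [Finset.sum_range_succ']
      norm_num
    have hflip : (∑ i ∈ range n, (-1 : ℤ) ^ (i + n) * (n.choose (i + 1) : ℤ) * ((i + 1 + m).factorial : ℤ))
        = -∑ i ∈ range n, (-1 : ℤ) ^ (i + 1 + n) * (n.choose (i + 1) : ℤ) * ((i + 1 + m).factorial : ℤ) := by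
      rw [← Finset.sum_neg_distrib]
      refine Finset.sum_congr rfl fun i _ => ?_
      rw [show i + 1 + n = (i + n) + 1 from by omega, pow_succ]
      ring
    rw [Finset.sum_range_succ, Nat.choose_succ_self, hflip, hU]
    push_cast
    ring
  rw [step1, Finset.sum_congr rfl step2, Finset.sum_add_distrib, step3, step4]
  ring

lemma Uaux_L2 (m n : ℕ) :
    Uaux (m + 1) (n + 1) = ((m : ℤ) + 1) * Uaux m (n + 1) + ((n : ℤ) + 1) * Uaux (m + 1) n := by
  have step2 : ∀ i ∈ range (n + 2),
      (-1 : ℤ) ^ (i + (n + 1)) * ((n + 1).choose i : ℤ) * ((i + (m + 1)).factorial : ℤ)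
      = ((m : ℤ) + 1) * ((-1 : ℤ) ^ (i + (n + 1)) * ((n + 1).choose i : ℤ) * ((i + m).factorial : ℤ))
        + (-1 : ℤ) ^ (i + (n + 1)) * (((n + 1).choose i : ℤ) * (i : ℤ)) * ((i + m).factorial : ℤ) := by
    intro i _
    have hf : ((i + (m + 1)).factorial : ℤ) = ((i : ℤ) + m + 1) * ((i + m).factorial : ℤ) := by
      rw [show i + (m + 1) = (i + m) + 1 from by omega]
      push_cast [Nat.factorial_succ]
      ring
    rw [hf]
    ring
  have hterm : ∀ i ∈ range (n + 1),
      (-1 : ℤ) ^ ((i + 1) + (n + 1)) * (((n + 1).choose (i + 1) : ℤ) * ((i + 1 : ℕ) : ℤ)) * ((i + 1 + m).factorial : ℤ)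
      = ((n : ℤ) + 1) * ((-1 : ℤ) ^ (i + n) * (n.choose i : ℤ) * ((i + (m + 1)).factorial : ℤ)) := by
    intro i _
    have hc : ((n : ℤ) + 1) * (n.choose i : ℤ) = ((n + 1).choose (i + 1) : ℤ) * ((i + 1 : ℕ) : ℤ) := by
      exact_mod_cast Nat.add_one_mul_choose_eq n i
    rw [show (i + 1) + (n + 1) = (i + n) + 2 from by omega,
        show i + 1 + m = i + (m + 1) from by omega]
    push_cast at hc ⊢
    linear_combination (-(-1 : ℤ) ^ (i + n) * ((i + (m + 1)).factorial : ℤ)) * hc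
  have step3 : (∑ i ∈ range (n + 2),
        (-1 : ℤ) ^ (i + (n + 1)) * (((n + 1).choose i : ℤ) * (i : ℤ)) * ((i + m).factorial : ℤ))
      = ((n : ℤ) + 1) * Uaux (m + 1) n := by
    rw [Finset.sum_range_succ']
    rw [Finset.sum_congr rfl hterm, ← Finset.mul_sum]
    unfold Uaux
    push_cast
    ring
  have lhs : Uaux (m + 1) (n + 1)
      = ∑ i ∈ range (n + 2),
          (-1 : ℤ) ^ (i + (n + 1)) * ((n + 1).choose i : ℤ) * ((i + (m + 1)).factorial : ℤ) := rfl
  rw [lhs, Finset.sum_congr rfl step2, Finset.sum_add_distrib, ← Finset.mul_sum, step3]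
  rfl

lemma Uaux_rec (m p : ℕ) :
    Uaux m (p + 2) = ((m : ℤ) + p + 1) * Uaux m (p + 1) + ((p : ℤ) + 1) * Uaux m p := by
  have h1 := Uaux_L1 m (p + 1)
  have h2 := Uaux_L2 m p
  have h3 := Uaux_L1 m p
  linear_combination h1 + h2 - ((p : ℤ) + 1) * h3

lemma bCoef_eq (m n : ℕ) :
    (m.factorial : ℤ) * bCoef (m + n) m = ((m + n).choose m : ℤ) * Uaux m n := by
  unfold bCoef Uaux
  rw [show m + n - m = n from by omega, Finset.mul_sum, Finset.mul_sum]
  refine Finset.sum_congr rfl fun i _ => ?_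
  have hfac : ((i + m).factorial : ℤ) = ((i + m).choose i : ℤ) * (i.factorial : ℤ) * (m.factorial : ℤ) := by
    have h := Nat.choose_mul_factorial_mul_factorial (show i ≤ i + m from by omega)
    rw [show i + m - i = m from by omega] at h
    exact_mod_cast h.symm
  rw [show i + (m + n) + m = (i + n) + 2 * m from by omega, hfac, pow_add, pow_mul, neg_one_sq, one_pow, mul_one]
  ring

lemma choose_step (m q : ℕ) :
    (m + q + 1) * Nat.choose (m + q) m = (q + 1) * Nat.choose (m + q + 1) m := by
  have h := Nat.add_one_mul_choose_eq (m + q) q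
  have e1 : (m + q).choose q = (m + q).choose m := by
    have := Nat.choose_symm (show m ≤ m + q from by omega)
    rwa [show m + q - m = q from by omega] at this
  have e2 : (m + q + 1).choose (q + 1) = (m + q + 1).choose m := by
    have := Nat.choose_symm (show m ≤ m + q + 1 from by omega)
    rwa [show m + q + 1 - m = q + 1 from by omega] at this
  rw [e1, e2] at h
  rw [mul_comm ((m + q + 1).choose m) (q + 1)] at h
  exact h

lemma bCoef_succ (m : ℕ) : bCoef (m + 1) m = ((m : ℤ) + 1) * m := by
  unfold bCoef
  rw [show m + 1 - m = 1 from by omega]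
  rw [Finset.sum_range_succ, Finset.sum_range_one]
  rw [show 0 + (m + 1) + m = 2 * m + 1 from by omega, show 1 + (m + 1) + m = 2 * m + 2 from by omega]
  simp [Nat.choose_succ_self_right, Nat.choose_one_right, pow_add, pow_mul]
  ring

lemma bCoef_self (m : ℕ) : bCoef m m = 1 := by
  unfold bCoef
  rw [Nat.sub_self, Finset.sum_range_one, show 0 + m + m = 2 * m from by omega, pow_mul]
  simp

lemma bCoef_pred (m : ℕ) (hm : 1 ≤ m) : bCoef (m - 1) m = 0 := by
  unfold bCoef
  rw [show m - 1 - m = 0 from by omega, Finset.sum_range_one,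
    Nat.choose_eq_zero_of_lt (show m - 1 < m from by omega)]
  simp

/-- **Recursion for the walled Brauer multiplicities.**
For `k > m` one has `b^{(k)}_m = (k(k-1)/(k-m)) · (b^{(k-2)}_m + b^{(k-1)}_m)`,
with initial conditions `b^{(m-1)}_m = 0` and `b^{(m)}_m = 1`. -/
theorem bCoef_recursion :
    (∀ k m : ℕ, m < k →
      (bCoef k m : ℚ) =
        ((k : ℚ) * ((k : ℚ) - 1) / ((k : ℚ) - (m : ℚ))) *
          ((bCoef (k - 2) m : ℚ) + (bCoef (k - 1) m : ℚ))) ∧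
    (∀ m : ℕ, 1 ≤ m → bCoef (m - 1) m = 0) ∧
    (∀ m : ℕ, bCoef m m = 1) := by
  refine ⟨?_, fun m hm => bCoef_pred m hm, fun m => bCoef_self m⟩
  intro k m hmk
  obtain ⟨n, rfl⟩ : ∃ n, k = m + n + 1 := ⟨k - m - 1, by omega⟩
  cases n with
  | zero =>
    simp only [Nat.add_zero]
    rw [show m + 1 - 2 = m - 1 from by omega, show m + 1 - 1 = m from by omega, bCoef_self]
    rcases Nat.eq_zero_or_pos m with hm | hm
    · subst hm
      norm_num [show bCoef 1 0 = 0 from by simpa using bCoef_succ 0, bCoef_self]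
    · rw [bCoef_pred m hm, bCoef_succ m]
      push_cast
      field_simp
      ring
  | succ p =>
    simp only [show m + (p + 1) + 1 = m + p + 2 from by omega]
    rw [show m + p + 2 - 2 = m + p from by omega, show m + p + 2 - 1 = m + p + 1 from by omega]
    have h2 := bCoef_eq m (p + 2); rw [show m + (p + 2) = m + p + 2 from by omega] at h2
    have h1 := bCoef_eq m (p + 1); rw [show m + (p + 1) = m + p + 1 from by omega] at h1
    have h0 := bCoef_eq m p
    have hU := Uaux_rec m p
    have hc2 : ((m : ℤ) + p + 2) * ((m + p + 1).choose m : ℤ)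
        = ((p : ℤ) + 2) * ((m + p + 2).choose m : ℤ) := by
      have h := choose_step m (p + 1)
      rw [show m + (p + 1) = m + p + 1 from by omega] at h
      rw [show m + p + 1 + 1 = m + p + 2 from by omega] at h
      exact_mod_cast h
    have hc1 : ((m : ℤ) + p + 2) * (((m : ℤ) + p + 1) * ((m + p).choose m : ℤ))
        = ((p : ℤ) + 2) * (((p : ℤ) + 1) * ((m + p + 2).choose m : ℤ)) := by
      have a' : ((m : ℤ) + p + 1) * ((m + p).choose m : ℤ) = ((p : ℤ) + 1) * ((m + p + 1).choose m : ℤ) := by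
        exact_mod_cast choose_step m p
      linear_combination ((m : ℤ) + p + 2) * a' + ((p : ℤ) + 1) * hc2
    have hZ : ((p : ℤ) + 2) * bCoef (m + p + 2) m
        = ((m : ℤ) + p + 2) * ((m : ℤ) + p + 1) * (bCoef (m + p) m + bCoef (m + p + 1) m) := by
      have hF : (m.factorial : ℤ) ≠ 0 := by exact_mod_cast m.factorial_ne_zero
      apply mul_left_cancel₀ hF
      linear_combination ((p : ℤ) + 2) * h2
        - ((m : ℤ) + p + 2) * ((m : ℤ) + p + 1) * h1
        - ((m : ℤ) + p + 2) * ((m : ℤ) + p + 1) * h0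
        + ((p : ℤ) + 2) * (((m + p + 2).choose m : ℕ) : ℤ) * hU
        - ((m : ℤ) + p + 1) * (Uaux m (p + 1)) * hc2
        - (Uaux m p) * hc1
    have hQ : ((p : ℚ) + 2) * (bCoef (m + p + 2) m : ℚ)
        = ((m : ℚ) + p + 2) * ((m : ℚ) + p + 1) * ((bCoef (m + p) m : ℚ) + (bCoef (m + p + 1) m : ℚ)) := by
      exact_mod_cast hZ
    have hne : ((m + p + 2 : ℕ) : ℚ) - (m : ℚ) ≠ 0 := by
      have : ((m + p + 2 : ℕ) : ℚ) - (m : ℚ) = (p : ℚ) + 2 := by push_cast; ring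
      rw [this]
      positivity
    rw [div_mul_eq_mul_div, eq_div_iff hne]
    push_cast
    linear_combination hQ
end
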